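/- Let C₁ > 0, C₂ > 0 and T > 0. Suppose f : [0,T] → ℝ is continuous on [0,T] and differentiable on (0,T), and satisfies the differential inequality f'(t) ≤ -C₁·f(t)² + C₂ for all t ∈ (0,T). Then for every t ∈ (0,T), f(t) ≤ 1/(C₁·t) + √(C₂/C₁). -/

import Mathlib

/-!
The barrier `h t = 1 / (C₁ t) + √(C₂ / C₁)` satisfies `h' = -C₁ h² + C₂ + 2 √(C₂ / C₁) / t`,
so it is a strict supersolution of `y' = -C₁ y² + C₂` for `t > 0`. As `h → +∞` when `t → 0⁺`
while `f` is bounded on `[0, T]`, we get `f ≤ h` at some small `a > 0`. From there the fencing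
theorem keeps `f ≤ h`: wherever `f = h`, the differential inequality gives
`f' ≤ -C₁ h² + C₂ < h'`, so `f` cannot cross `h` upwards.
-/

open Set Filter Topology

noncomputable def riccatiBarrier (C₁ C₂ t : ℝ) : ℝ := 1 / (C₁ * t) + √(C₂ / C₁)

theorem hasDerivAt_riccatiBarrier {C₁ C₂ t : ℝ} (ht : t ≠ 0) :
    HasDerivAt (riccatiBarrier C₁ C₂) (-1 / (C₁ * t ^ 2)) t := by
  have h_eq : riccatiBarrier C₁ C₂ = fun s => C₁⁻¹ * s⁻¹ + √(C₂ / C₁) := by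
    ext s
    rw [riccatiBarrier, one_div, mul_inv]
  rw [h_eq]
  exact (((hasDerivAt_inv ht).const_mul C₁⁻¹).add_const _).congr_deriv (by ring)

theorem neg_mul_riccatiBarrier_sq_add_lt {C₁ C₂ t : ℝ} (hC₁ : 0 < C₁) (hC₂ : 0 < C₂)
    (ht : 0 < t) : -C₁ * riccatiBarrier C₁ C₂ t ^ 2 + C₂ < -1 / (C₁ * t ^ 2) := by
  set c := √(C₂ / C₁)
  have hc : 0 < c := Real.sqrt_pos.mpr (div_pos hC₂ hC₁)
  have hc_sq : C₁ * c ^ 2 = C₂ := by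
    rw [Real.sq_sqrt (div_pos hC₂ hC₁).le]
    field_simp
  have h_expand : -C₁ * riccatiBarrier C₁ C₂ t ^ 2 + C₂ = -1 / (C₁ * t ^ 2) - 2 * c / t := by
    simp only [riccatiBarrier]
    field_simp
    linear_combination (-C₁ * t ^ 2) * hc_sq
  rw [h_expand]
  have : 0 < 2 * c / t := by positivity
  linarith

theorem tendsto_riccatiBarrier_nhdsGT_zero {C₁ : ℝ} (C₂ : ℝ) (hC₁ : 0 < C₁) :
    Tendsto (riccatiBarrier C₁ C₂) (𝓝[>] 0) atTop := by
  have h : Tendsto (fun t : ℝ => C₁⁻¹ * t⁻¹) (𝓝[>] 0) atTop :=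
    tendsto_inv_nhdsGT_zero.const_mul_atTop (inv_pos.mpr hC₁)
  refine tendsto_atTop_add_const_right _ _ (h.congr fun t => ?_)
  rw [one_div, mul_inv]

theorem exists_mem_Ioo_le_of_bddAbove_of_tendsto_atTop {f g : ℝ → ℝ} {b : ℝ} (hb : 0 < b)
    (hf : BddAbove (f '' Ioo 0 b)) (hg : Tendsto g (𝓝[>] 0) atTop) :
    ∃ a ∈ Ioo 0 b, f a ≤ g a := by
  obtain ⟨M, hM⟩ := hf
  obtain ⟨a, hga, ha⟩ := ((hg.eventually_ge_atTop M).and (Ioo_mem_nhdsGT hb)).exists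
  exact ⟨a, ha, (hM (mem_image_of_mem f ha)).trans hga⟩

theorem riccati_comparison_general (C₁ C₂ T : ℝ) (hC₁ : 0 < C₁) (hC₂ : 0 < C₂)
    (f : ℝ → ℝ) (hcont : ContinuousOn f (Set.Icc 0 T))
    (hdiff : ∀ t ∈ Set.Ioo 0 T, DifferentiableAt ℝ f t)
    (hineq : ∀ t ∈ Set.Ioo 0 T, deriv f t ≤ -C₁ * (f t) ^ 2 + C₂) :
    ∀ t ∈ Set.Ioo 0 T, f t ≤ 1 / (C₁ * t) + Real.sqrt (C₂ / C₁) := by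
  intro t₀ ht₀
  have hbdd : BddAbove (f '' Ioo 0 t₀) :=
    (isCompact_Icc.bddAbove_image hcont).mono
      (image_mono (Ioo_subset_Icc_self.trans (Icc_subset_Icc_right ht₀.2.le)))
  obtain ⟨a, ha, hfa⟩ := exists_mem_Ioo_le_of_bddAbove_of_tendsto_atTop ht₀.1 hbdd
    (tendsto_riccatiBarrier_nhdsGT_zero C₂ hC₁)
  have hsub : Icc a t₀ ⊆ Ioo 0 T := Icc_subset_Ioo ha.1 ht₀.2
  have hbarrier : ∀ x ∈ Icc a t₀, HasDerivAt (riccatiBarrier C₁ C₂) (-1 / (C₁ * x ^ 2)) x :=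
    fun x hx => hasDerivAt_riccatiBarrier (hsub hx).1.ne'
  refine image_le_of_deriv_right_lt_deriv_boundary' (hcont.mono (hsub.trans Ioo_subset_Icc_self))
    (fun x hx => (hdiff x (hsub (Ico_subset_Icc_self hx))).hasDerivAt.hasDerivWithinAt) hfa
    (fun x hx => (hbarrier x hx).continuousAt.continuousWithinAt)
    (fun x hx => (hbarrier x (Ico_subset_Icc_self hx)).hasDerivWithinAt)
    (fun x hx hfx => ?_) ⟨ha.2.le, le_rfl⟩
  have hxT := hsub (Ico_subset_Icc_self hx)
  calc deriv f x ≤ -C₁ * riccatiBarrier C₁ C₂ x ^ 2 + C₂ := hfx ▸ hineq x hxT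
    _ < -1 / (C₁ * x ^ 2) := neg_mul_riccatiBarrier_sq_add_lt hC₁ hC₂ hxT.1

/-- Scalar ODE comparison principle underlying the Shi-type estimate:
if `f` is continuous on `[0,T]`, differentiable on `(0,T)`, and satisfies
`f' ≤ -C₁ f² + C₂` there, then `f t ≤ 1/(C₁ t) + √(C₂/C₁)` on `(0,T)`. -/
theorem riccati_comparison (C₁ C₂ T : ℝ) (hC₁ : 0 < C₁) (hC₂ : 0 < C₂) (hT : 0 < T)
    (f : ℝ → ℝ) (hcont : ContinuousOn f (Set.Icc 0 T))
    (hdiff : ∀ t ∈ Set.Ioo 0 T, DifferentiableAt ℝ f t)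
    (hineq : ∀ t ∈ Set.Ioo 0 T, deriv f t ≤ -C₁ * (f t) ^ 2 + C₂) :
    ∀ t ∈ Set.Ioo 0 T, f t ≤ 1 / (C₁ * t) + Real.sqrt (C₂ / C₁) :=
  riccati_comparison_general C₁ C₂ T hC₁ hC₂ f hcont hdiff hineq
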